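/- arXiv:2403.13998 — 5 statements merged into one kernel-verified Lean document; each statement's English description precedes it below -/
import Mathlib

section
/- Let f : ℝ × ℝ → ℝ be Lipschitz continuous in its first argument with constant L_f, 2π-periodic in its first argument, and continuous in its second argument; let D : ℝ → ℝ be Lipschitz continuous with constant L_D, 2π-periodic, and satisfy |D(u)| ≤ 1 for all u; let W : [0,1]² → [0,1] be continuous and symmetric. Then for every θ₀ ∈ C⁰([0,1]) the continuum dynamical system ∂ₜθ(t,x) = f(θ(t,x),t) + ∫₀¹ W(x,y) D(θ(t,y) − θ(t,x)) dy admits a unique global-in-time solution θ ∈ C¹([0,∞), C⁰([0,1])) with θ(0,·) = θ₀. -/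
/-!
The right-hand side is a time-dependent vector field `F t` on the Banach space `C([0,1])`. It is
globally Lipschitz with constant `Lf + 2 LD` (the coupling term moves by at most `2 LD ‖u - v‖`
because `|W| ≤ 1`), continuous in time, and bounded on `[0, T] × C([0,1])` for every `T`: a
Lipschitz function that is periodic in `u` is bounded in `u`, and `|W|, |D| ≤ 1` bound the
coupling term. Picard–Lindelöf then gives a solution on every `[0, n]`; by Grönwall uniqueness
these agree on overlaps and glue to a global solution, which is unique for the same reason.
-/

open MeasureTheory Set

/-- `θ : ℝ → C([0,1],ℝ)` is a global-in-time solution of the continuum dynamical system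
`∂ₜθ(t,x) = f(θ(t,x),t) + ∫₀¹ W(x,y) D(θ(t,y) − θ(t,x)) dy` on `[0,∞)` with initial
condition `θ₀`: a continuously differentiable curve in the Banach space `C([0,1],ℝ)`
satisfying the equation for all `t ≥ 0` and `x ∈ [0,1]`. -/
def IsCDSSolution (f : ℝ → ℝ → ℝ) (D : ℝ → ℝ)
    (W : Icc (0:ℝ) 1 → Icc (0:ℝ) 1 → ℝ) (θ₀ : C(Icc (0:ℝ) 1, ℝ))
    (θ : ℝ → C(Icc (0:ℝ) 1, ℝ)) : Prop :=
  θ 0 = θ₀ ∧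
  ∃ v : ℝ → C(Icc (0:ℝ) 1, ℝ),
    ContinuousOn v (Ici 0) ∧
    (∀ t ∈ Ici (0:ℝ), HasDerivWithinAt θ (v t) (Ici 0) t) ∧
    (∀ t ∈ Ici (0:ℝ), ∀ x : Icc (0:ℝ) 1,
      v t x = f (θ t x) t + ∫ y : Icc (0:ℝ) 1, W x y * D (θ t y - θ t x))

open scoped NNReal

section ODE

variable {E : Type*} [NormedAddCommGroup E] [NormedSpace ℝ E] {F : ℝ → E → E} {K : ℝ≥0}

theorem HasDerivWithinAt.Ici_of_Icc {θ : ℝ → E} {θ' : E} {a b t : ℝ} (ht : t ∈ Ico a b)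
    (h : HasDerivWithinAt θ θ' (Icc a b) t) : HasDerivWithinAt θ θ' (Ici t) t :=
  (hasDerivWithinAt_inter (Iio_mem_nhds ht.2)).1 (h.mono fun _ hs => ⟨ht.1.trans hs.1, hs.2.le⟩)

theorem eqOn_Icc_of_hasDerivWithinAt (hF : ∀ t, LipschitzWith K (F t)) {a b : ℝ}
    {θ₁ θ₂ : ℝ → E}
    (h₁ : ∀ t ∈ Icc a b, HasDerivWithinAt θ₁ (F t (θ₁ t)) (Icc a b) t)
    (h₂ : ∀ t ∈ Icc a b, HasDerivWithinAt θ₂ (F t (θ₂ t)) (Icc a b) t) (h₀ : θ₁ a = θ₂ a) :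
    EqOn θ₁ θ₂ (Icc a b) :=
  ODE_solution_unique hF (fun t ht => (h₁ t ht).continuousWithinAt)
    (fun t ht => (h₁ t (Ico_subset_Icc_self ht)).Ici_of_Icc ht)
    (fun t ht => (h₂ t ht).continuousWithinAt)
    (fun t ht => (h₂ t (Ico_subset_Icc_self ht)).Ici_of_Icc ht) h₀

theorem eqOn_Ici_of_hasDerivWithinAt (hF : ∀ t, LipschitzWith K (F t)) {a : ℝ}
    {θ₁ θ₂ : ℝ → E}
    (h₁ : ∀ t ∈ Ici a, HasDerivWithinAt θ₁ (F t (θ₁ t)) (Ici a) t)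
    (h₂ : ∀ t ∈ Ici a, HasDerivWithinAt θ₂ (F t (θ₂ t)) (Ici a) t) (h₀ : θ₁ a = θ₂ a) :
    EqOn θ₁ θ₂ (Ici a) := fun _ ht =>
  eqOn_Icc_of_hasDerivWithinAt hF (fun s hs => (h₁ s hs.1).mono Icc_subset_Ici_self)
    (fun s hs => (h₂ s hs.1).mono Icc_subset_Ici_self) h₀ ⟨ht, le_rfl⟩

variable [CompleteSpace E]

theorem exists_forall_mem_Icc_hasDerivWithinAt_of_lipschitzWith
    (hF : ∀ t, LipschitzWith K (F t)) (hcont : ∀ u, Continuous (F · u)) {a b C : ℝ}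
    (hab : a ≤ b) (hC : ∀ t ∈ Icc a b, ∀ u, ‖F t u‖ ≤ C) (x₀ : E) :
    ∃ θ : ℝ → E, θ a = x₀ ∧ ∀ t ∈ Icc a b, HasDerivWithinAt θ (F t (θ t)) (Icc a b) t := by
  have hC₀ : 0 ≤ C := (norm_nonneg _).trans (hC a ⟨le_rfl, hab⟩ x₀)
  have hPL : IsPicardLindelof F (tmin := a) (tmax := b) ⟨a, le_rfl, hab⟩ x₀
      ⟨C * (b - a), mul_nonneg hC₀ (sub_nonneg.2 hab)⟩ 0 ⟨C, hC₀⟩ K :=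
    { lipschitzOnWith := fun t _ => (hF t).lipschitzOnWith
      continuousOn := fun u _ => (hcont u).continuousOn
      norm_le := fun t ht u _ => hC t ht u
      mul_max_le := by simp [hab]; rfl }
  exact hPL.exists_eq_forall_mem_Icc_hasDerivWithinAt₀

theorem exists_forall_mem_Ici_hasDerivWithinAt_of_lipschitzWith
    (hF : ∀ t, LipschitzWith K (F t)) (hcont : ∀ u, Continuous (F · u)) {a : ℝ}
    (hbdd : ∀ b, ∃ C, ∀ t ∈ Icc a b, ∀ u, ‖F t u‖ ≤ C) (x₀ : E) :
    ∃ θ : ℝ → E, θ a = x₀ ∧ ∀ t ∈ Ici a, HasDerivWithinAt θ (F t (θ t)) (Ici a) t := by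
  have hsol (n : ℕ) : ∃ θ : ℝ → E, θ a = x₀ ∧
      ∀ t ∈ Icc a (a + n), HasDerivWithinAt θ (F t (θ t)) (Icc a (a + n)) t :=
    have ⟨_, hC⟩ := hbdd (a + n)
    exists_forall_mem_Icc_hasDerivWithinAt_of_lipschitzWith hF hcont
      (le_add_of_nonneg_right n.cast_nonneg) hC x₀
  choose sol hsol₀ hsol using hsol
  have hagree {m n : ℕ} {t : ℝ} (hm : t ∈ Icc a (a + m)) (hn : t ∈ Icc a (a + n)) :
      sol m t = sol n t := by
    suffices ∀ m n : ℕ, m ≤ n → EqOn (sol m) (sol n) (Icc a (a + m)) by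
      rcases le_total m n with h | h
      exacts [this m n h hm, (this n m h hn).symm]
    intro m n hmn
    have hsub : Icc a (a + m) ⊆ Icc a (a + n) := Icc_subset_Icc_right (by gcongr)
    exact eqOn_Icc_of_hasDerivWithinAt hF (hsol m) (fun t ht => (hsol n t (hsub ht)).mono hsub)
      ((hsol₀ m).trans (hsol₀ n).symm)
  -- `t < a + N t` strictly, so `Icc a (a + N t)` is a neighbourhood of `t` within `Ici a`
  let N (t : ℝ) : ℕ := ⌊t - a⌋₊ + 1
  have hN (t : ℝ) : t < a + N t := by
    have := Nat.lt_floor_add_one (t - a); push_cast [N]; linarith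
  refine ⟨fun t => sol (N t) t, by simp [N, hsol₀], fun t ht => ?_⟩
  have hderiv := (hsol (N t) t ⟨ht, (hN t).le⟩).congr
    (fun s hs => hagree ⟨hs.1, (hN s).le⟩ hs) rfl
  rw [← Ici_inter_Iic] at hderiv
  exact (hasDerivWithinAt_inter (Iic_mem_nhds (hN t))).1 hderiv

end ODE

theorem Function.Periodic.abs_le_of_lipschitzWith {h : ℝ → ℝ} {p : ℝ} {L : ℝ≥0}
    (hper : Function.Periodic h p) (hp : 0 < p) (hh : LipschitzWith L h) (z : ℝ) :
    |h z| ≤ |h 0| + L * p := by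
  obtain ⟨y, hy, hzy⟩ := hper.exists_mem_Ico₀ hp z
  have hdist : dist (h y) (h 0) ≤ L * p :=
    (hh.dist_le_mul y 0).trans <| by
      gcongr; rw [Real.dist_eq, sub_zero, abs_of_nonneg hy.1]; exact hy.2.le
  rw [hzy]
  linarith [abs_sub_abs_le_abs_sub (h y) (h 0), Real.dist_eq (h y) (h 0)]

theorem exists_forall_abs_le_of_periodic {f : ℝ → ℝ → ℝ} {L : ℝ≥0} {p : ℝ} (hp : 0 < p)
    (hf_lip : ∀ t, LipschitzWith L fun u => f u t) (hf_per : ∀ u t, f (u + p) t = f u t)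
    (hf_cont : Continuous fun t => f 0 t) {S : Set ℝ} (hS : IsCompact S) :
    ∃ B, ∀ t ∈ S, ∀ z, |f z t| ≤ B := by
  obtain ⟨M, hM⟩ := hS.exists_bound_of_continuousOn hf_cont.continuousOn
  refine ⟨M + L * p, fun t ht z => ?_⟩
  have := Function.Periodic.abs_le_of_lipschitzWith (fun u => hf_per u t) hp (hf_lip t) z
  linarith [hM t ht, Real.norm_eq_abs (f 0 t)]

theorem LipschitzWith.continuousMap_comp {X Y Z : Type*} [TopologicalSpace X] [CompactSpace X]
    [PseudoMetricSpace Y] [PseudoMetricSpace Z] {K : ℝ≥0} {g : C(Y, Z)} (hg : LipschitzWith K g) :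
    LipschitzWith K (g.comp : C(X, Y) → C(X, Z)) :=
  LipschitzWith.of_dist_le_mul fun u v => (ContinuousMap.dist_le (by positivity)).2 fun x =>
    (hg.dist_le_mul _ _).trans (by gcongr; exact ContinuousMap.dist_apply_le_dist x)

section Coupling

variable {X : Type*} [MetricSpace X] [CompactSpace X] [MeasurableSpace X] [OpensMeasurableSpace X]
  (μ : Measure X) (W : C(X × X, ℝ)) (D : C(ℝ, ℝ))

noncomputable def couplingMap [IsFiniteMeasure μ] (u : C(X, ℝ)) : C(X, ℝ) where
  toFun x := ∫ y, W (x, y) * D (u y - u x) ∂μ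
  continuous_toFun := by
    have : Continuous fun p : X × X => W p * D (u p.2 - u p.1) := by fun_prop
    simpa only [Measure.restrict_univ] using
      continuous_parametric_integral_of_continuous (μ := μ) this isCompact_univ

@[simp]
theorem couplingMap_apply [IsFiniteMeasure μ] (u : C(X, ℝ)) (x : X) :
    couplingMap μ W D u x = ∫ y, W (x, y) * D (u y - u x) ∂μ :=
  rfl

noncomputable def cdsField [IsFiniteMeasure μ] (f : ℝ → C(ℝ, ℝ)) (t : ℝ) (u : C(X, ℝ)) :
    C(X, ℝ) :=
  (f t).comp u + couplingMap μ W D u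

variable [IsProbabilityMeasure μ] {W D}

theorem norm_couplingMap_le_one (hW : ∀ p, |W p| ≤ 1) (hD : ∀ z, |D z| ≤ 1) (u : C(X, ℝ)) :
    ‖couplingMap μ W D u‖ ≤ 1 := by
  refine (ContinuousMap.norm_le _ zero_le_one).2 fun x => ?_
  have hpt (y : X) : ‖W (x, y) * D (u y - u x)‖ ≤ 1 := by
    rw [norm_mul]; exact mul_le_one₀ (hW _) (norm_nonneg _) (hD _)
  simpa using norm_integral_le_of_norm_le_const (μ := μ) (Filter.Eventually.of_forall hpt)

theorem lipschitzWith_couplingMap (hW : ∀ p, |W p| ≤ 1) {L : ℝ≥0} (hD : LipschitzWith L D) :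
    LipschitzWith (2 * L) (couplingMap μ W D) := by
  refine LipschitzWith.of_dist_le_mul fun u v =>
    (ContinuousMap.dist_le (by positivity)).2 fun x => ?_
  have hint (w : C(X, ℝ)) : Integrable (fun y => W (x, y) * D (w y - w x)) μ :=
    (BoundedContinuousFunction.mkOfCompact
      ⟨fun y => W (x, y) * D (w y - w x), by fun_prop⟩).integrable μ
  have hpt (y : X) :
      ‖W (x, y) * D (u y - u x) - W (x, y) * D (v y - v x)‖ ≤ 2 * L * dist u v := by
    rw [← mul_sub, norm_mul, ← dist_eq_norm]
    calc ‖W (x, y)‖ * dist (D (u y - u x)) (D (v y - v x))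
        ≤ 1 * (L * (dist (u y) (v y) + dist (u x) (v x))) := by
          gcongr
          · exact hW _
          · exact (hD.dist_le_mul _ _).trans (by gcongr; exact dist_sub_sub_le _ _ _ _)
      _ ≤ 1 * (L * (dist u v + dist u v)) := by
          gcongr <;> exact ContinuousMap.dist_apply_le_dist _
      _ = 2 * L * dist u v := by ring
  rw [couplingMap_apply, couplingMap_apply, dist_eq_norm, ← integral_sub (hint u) (hint v)]
  simpa using norm_integral_le_of_norm_le_const (μ := μ) (Filter.Eventually.of_forall hpt)

theorem lipschitzWith_cdsField {f : ℝ → C(ℝ, ℝ)} {Lf LD : ℝ≥0} (hf : ∀ t, LipschitzWith Lf (f t))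
    (hW : ∀ p, |W p| ≤ 1) (hD : LipschitzWith LD D) (t : ℝ) :
    LipschitzWith (Lf + 2 * LD) (cdsField μ W D f t) :=
  (hf t).continuousMap_comp.add (lipschitzWith_couplingMap μ hW hD)

theorem continuous_cdsField_apply {f : ℝ → C(ℝ, ℝ)} (hf : Continuous fun q : ℝ × ℝ => f q.1 q.2)
    (u : C(X, ℝ)) : Continuous (cdsField μ W D f · u) :=
  (ContinuousMap.curry ⟨fun p : ℝ × X => f p.1 (u p.2),
    hf.comp (continuous_fst.prodMk (u.continuous.comp continuous_snd))⟩).continuous.add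
    continuous_const

theorem norm_cdsField_le {f : ℝ → C(ℝ, ℝ)} {t B : ℝ} (hW : ∀ p, |W p| ≤ 1) (hD : ∀ z, |D z| ≤ 1)
    (hB : ∀ z, |f t z| ≤ B) (u : C(X, ℝ)) : ‖cdsField μ W D f t u‖ ≤ B + 1 := by
  refine (norm_add_le _ _).trans (add_le_add ?_ (norm_couplingMap_le_one μ hW hD u))
  exact ((f t).comp u).norm_le ((abs_nonneg _).trans (hB 0)) |>.2 fun x => hB (u x)

end Coupling

theorem isCDSSolution_iff {f : ℝ → ℝ → ℝ} {D : ℝ → ℝ} {W : Icc (0:ℝ) 1 → Icc (0:ℝ) 1 → ℝ}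
    {θ₀ : C(Icc (0:ℝ) 1, ℝ)} {θ : ℝ → C(Icc (0:ℝ) 1, ℝ)}
    {F : ℝ → C(Icc (0:ℝ) 1, ℝ) → C(Icc (0:ℝ) 1, ℝ)}
    (hF : ∀ t u x, F t u x = f (u x) t + ∫ y : Icc (0:ℝ) 1, W x y * D (u y - u x))
    (hF_cont : Continuous fun p : ℝ × C(Icc (0:ℝ) 1, ℝ) => F p.1 p.2) :
    IsCDSSolution f D W θ₀ θ ↔
      θ 0 = θ₀ ∧ ∀ t ∈ Ici (0:ℝ), HasDerivWithinAt θ (F t (θ t)) (Ici 0) t := by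
  have hv (v : ℝ → C(Icc (0:ℝ) 1, ℝ)) :
      (∀ t ∈ Ici (0:ℝ), ∀ x, v t x = f (θ t x) t + ∫ y : Icc (0:ℝ) 1, W x y * D (θ t y - θ t x))
        ↔ ∀ t ∈ Ici (0:ℝ), v t = F t (θ t) := by
    simp only [ContinuousMap.ext_iff, hF]
  constructor
  · rintro ⟨h₀, v, -, hθ, hvF⟩
    exact ⟨h₀, fun t ht => (hv v).1 hvF t ht ▸ hθ t ht⟩
  · rintro ⟨h₀, hθ⟩
    have hθ_cont : ContinuousOn θ (Ici 0) := fun t ht => (hθ t ht).continuousWithinAt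
    exact ⟨h₀, _, hF_cont.comp_continuousOn (continuousOn_id.prodMk hθ_cont), hθ,
      (hv _).2 fun _ _ => rfl⟩

theorem statement0_general (Lf LD : NNReal) (f : ℝ → ℝ → ℝ) (D : ℝ → ℝ)
    (W : Icc (0:ℝ) 1 → Icc (0:ℝ) 1 → ℝ)
    (hf_lip : ∀ t, LipschitzWith Lf fun u => f u t)
    (hf_per : ∀ u t, f (u + 2 * Real.pi) t = f u t)
    (hf_cont : ∀ u, Continuous fun t => f u t)
    (hD_lip : LipschitzWith LD D)
    (hD_bdd : ∀ u, |D u| ≤ 1)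
    (hW_cont : Continuous fun p : Icc (0:ℝ) 1 × Icc (0:ℝ) 1 => W p.1 p.2)
    (hW_mem : ∀ x y, W x y ∈ Icc (0:ℝ) 1)
    (θ₀ : C(Icc (0:ℝ) 1, ℝ)) :
    (∃ θ : ℝ → C(Icc (0:ℝ) 1, ℝ), IsCDSSolution f D W θ₀ θ) ∧
      ∀ θ₁ θ₂ : ℝ → C(Icc (0:ℝ) 1, ℝ),
        IsCDSSolution f D W θ₀ θ₁ → IsCDSSolution f D W θ₀ θ₂ →
          ∀ t ∈ Ici (0:ℝ), θ₁ t = θ₂ t := by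
  let fₜ (t : ℝ) : C(ℝ, ℝ) := ⟨fun u => f u t, (hf_lip t).continuous⟩
  let F := cdsField volume ⟨fun p => W p.1 p.2, hW_cont⟩ ⟨D, hD_lip.continuous⟩ fₜ
  have hW (p : Icc (0:ℝ) 1 × Icc (0:ℝ) 1) : |W p.1 p.2| ≤ 1 :=
    abs_le.2 ⟨by linarith [(hW_mem p.1 p.2).1], (hW_mem p.1 p.2).2⟩
  have hF_lip : ∀ t, LipschitzWith (Lf + 2 * LD) (F t) :=
    lipschitzWith_cdsField volume hf_lip hW hD_lip
  have hF_cont : ∀ u, Continuous (F · u) := continuous_cdsField_apply volume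
    (continuous_prod_of_continuous_lipschitzWith' (fun q : ℝ × ℝ => f q.2 q.1) Lf hf_lip hf_cont)
  have hF_bdd (b : ℝ) : ∃ C, ∀ t ∈ Icc 0 b, ∀ u, ‖F t u‖ ≤ C := by
    obtain ⟨B, hB⟩ := exists_forall_abs_le_of_periodic Real.two_pi_pos hf_lip hf_per (hf_cont 0)
      (isCompact_Icc : IsCompact (Icc 0 b))
    exact ⟨B + 1, fun t ht => norm_cdsField_le volume hW hD_bdd (hB t ht)⟩
  have hsol (θ : ℝ → C(Icc (0:ℝ) 1, ℝ)) : IsCDSSolution f D W θ₀ θ ↔ _ := isCDSSolution_iff (F := F)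
    (fun _ _ _ => rfl) (continuous_prod_of_continuous_lipschitzWith' _ _ hF_lip hF_cont)
  refine ⟨?_, fun θ₁ θ₂ h₁ h₂ => ?_⟩
  · obtain ⟨θ, h₀, hθ⟩ :=
      exists_forall_mem_Ici_hasDerivWithinAt_of_lipschitzWith hF_lip hF_cont hF_bdd θ₀
    exact ⟨θ, (hsol θ).2 ⟨h₀, hθ⟩⟩
  · rw [hsol] at h₁ h₂
    exact eqOn_Ici_of_hasDerivWithinAt hF_lip h₁.2 h₂.2 (h₁.1.trans h₂.1.symm)

/-- Existence and uniqueness of a global-in-time solution of the continuum dynamical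
system, under the regularity assumptions on `f`, `D` and `W`. -/
theorem statement0 (Lf LD : NNReal) (f : ℝ → ℝ → ℝ) (D : ℝ → ℝ)
    (W : Icc (0:ℝ) 1 → Icc (0:ℝ) 1 → ℝ)
    (hf_lip : ∀ t, LipschitzWith Lf fun u => f u t)
    (hf_per : ∀ u t, f (u + 2 * Real.pi) t = f u t)
    (hf_cont : ∀ u, Continuous fun t => f u t)
    (hD_lip : LipschitzWith LD D)
    (hD_per : ∀ u, D (u + 2 * Real.pi) = D u)
    (hD_bdd : ∀ u, |D u| ≤ 1)
    (hW_cont : Continuous fun p : Icc (0:ℝ) 1 × Icc (0:ℝ) 1 => W p.1 p.2)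
    (hW_mem : ∀ x y, W x y ∈ Icc (0:ℝ) 1)
    (hW_symm : ∀ x y, W x y = W y x)
    (θ₀ : C(Icc (0:ℝ) 1, ℝ)) :
    (∃ θ : ℝ → C(Icc (0:ℝ) 1, ℝ), IsCDSSolution f D W θ₀ θ) ∧
      ∀ θ₁ θ₂ : ℝ → C(Icc (0:ℝ) 1, ℝ),
        IsCDSSolution f D W θ₀ θ₁ → IsCDSSolution f D W θ₀ θ₂ →
          ∀ t ∈ Ici (0:ℝ), θ₁ t = θ₂ t :=
  statement0_general Lf LD f D W hf_lip hf_per hf_cont hD_lip hD_bdd hW_cont hW_mem θ₀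
end

section
/- Derivative of the order parameter along the continuum Kuramoto flow: Let θ : [0,∞) × [0,1] → ℝ be continuous, with ∂ₜθ continuous, satisfying the homogeneous continuum Kuramoto model ∂ₜθ(t,x) = ∫₀¹ sin(θ(t,y) − θ(t,x)) dy for all t ≥ 0 and x ∈ [0,1]. Let r(t) = |∫₀¹ e^{iθ(t,y)} dy| and suppose that on some interval r(t) > 0 and ψ(t) ∈ ℝ satisfies r(t)·e^{iψ(t)} = ∫₀¹ e^{iθ(t,y)} dy. Then on that interval r is differentiable and dr/dt(t) = r(t)·∫₀¹ sin²(ψ(t) − θ(t,x)) dx. -/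
/-! With `Z(t) = ∫₀¹ e^{iθ(t,y)} dy = r(t) e^{iψ(t)}`, the Kuramoto velocity is the mean field
`∂ₜθ(t,x) = ⟪i e^{iθ(t,x)}, Z⟫ = r sin(ψ − θ(t,x))`. Since `∂ₜθ` is bounded on compact sets, the
integrand of `Z` is uniformly Lipschitz in time, so `Z` may be differentiated under the integral
sign: `Z' = ∫₀¹ ∂ₜθ · i e^{iθ}`. Away from `Z = 0` the modulus `r = ‖Z‖` has derivative
`⟪Z, Z'⟫ / r`, and `⟪e^{iψ}, i e^{iθ}⟫ = sin(ψ − θ)` turns this into `r ∫₀¹ sin²(ψ − θ)`. -/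

open Set Filter

/-- The order parameter `r[φ] = |∫₀¹ e^{iφ(y)} dy|` of a phase configuration `φ`. -/
noncomputable def orderParam (φ : ℝ → ℝ) : ℝ :=
  ‖(∫ y in (0:ℝ)..1, Complex.exp (Complex.I * (φ y : ℂ)))‖

open MeasureTheory Topology Complex
open scoped RealInnerProductSpace Interval

theorem HasDerivWithinAt.norm {F : Type*} [NormedAddCommGroup F] [InnerProductSpace ℝ F]
    {f : ℝ → F} {f' : F} {s : Set ℝ} {x : ℝ} (hf : HasDerivWithinAt f f' s x) (h0 : f x ≠ 0) :
    HasDerivWithinAt (‖f ·‖) (⟪f x, f'⟫ / ‖f x‖) s x := by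
  have hsq : ‖f x‖ ^ 2 ≠ 0 := by positivity
  have := hf.norm_sq.sqrt hsq
  simp only [Real.sqrt_sq (norm_nonneg _)] at this
  convert this using 1
  field_simp

theorem intervalIntegral.hasDerivWithinAt_integral_of_lipschitz
    {E : Type*} [NormedAddCommGroup E] [NormedSpace ℝ E] [CompleteSpace E]
    {μ : Measure ℝ} [IsLocallyFiniteMeasure μ]
    {F : ℝ → ℝ → E} {F' : ℝ → E} {s : Set ℝ} {t a b C : ℝ}
    (hF_int : ∀ᶠ u in 𝓝[s] t, IntervalIntegrable (F u) μ a b)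
    (hFt_int : IntervalIntegrable (F t) μ a b)
    (h_lip : ∀ᶠ u in 𝓝[s] t, ∀ᵐ y ∂μ, y ∈ Ι a b → ‖F u y - F t y‖ ≤ C * |u - t|)
    (hF' : ∀ᵐ y ∂μ, y ∈ Ι a b → HasDerivWithinAt (F · y) (F' y) s t) :
    HasDerivWithinAt (fun u => ∫ y in a..b, F u y ∂μ) (∫ y in a..b, F' y ∂μ) s t := by
  rw [hasDerivWithinAt_iff_tendsto_slope]
  have hmono : 𝓝[s \ {t}] t ≤ 𝓝[s] t := nhdsWithin_mono t sdiff_subset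
  have hF_int' := hmono hF_int
  have h_slope : (fun u => ∫ y in a..b, slope (F · y) t u ∂μ)
      =ᶠ[𝓝[s \ {t}] t] slope (fun u => ∫ y in a..b, F u y ∂μ) t := by
    filter_upwards [hF_int'] with u hu
    simp only [slope_def_module]
    rw [intervalIntegral.integral_smul, intervalIntegral.integral_sub hu hFt_int]
  refine Tendsto.congr' h_slope
    (intervalIntegral.tendsto_integral_filter_of_dominated_convergence (fun _ => C) ?_ ?_
      intervalIntegrable_const ?_)
  · filter_upwards [hF_int'] with u hu
    simp only [slope_def_module]
    exact ((hu.sub hFt_int).smul _).def'.aestronglyMeasurable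
  · filter_upwards [hmono h_lip, self_mem_nhdsWithin] with u hu hne
    filter_upwards [hu] with y hy hy_mem
    have hpos : 0 < |u - t| := abs_pos.mpr (sub_ne_zero.mpr hne.2)
    rw [slope_def_module, norm_smul, norm_inv, Real.norm_eq_abs, inv_mul_le_iff₀ hpos, mul_comm]
    exact hy hy_mem
  · filter_upwards [hF'] with y hy hy_mem
    simpa only [hasDerivWithinAt_iff_tendsto_slope] using hy hy_mem

theorem norm_exp_I_mul_sub_exp_I_mul_le (a b : ℝ) :
    ‖exp (I * a) - exp (I * b)‖ ≤ |a - b| := by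
  have h : exp (I * a) - exp (I * b) = exp (I * b) * (exp (I * ↑(a - b)) - 1) := by
    rw [mul_sub, ← exp_add]; push_cast; ring_nf
  rw [h, norm_mul, norm_exp_I_mul_ofReal, one_mul]
  exact Real.norm_exp_I_mul_ofReal_sub_one_le

theorem inner_I_mul_exp_I_mul (c a : ℝ) :
    ⟪I * exp (I * c), exp (I * a)⟫ = Real.sin (a - c) := by
  rw [Complex.inner, mul_comm I (exp _), mul_comm I, exp_mul_I, mul_comm I, exp_mul_I]
  simp [← ofReal_cos, ← ofReal_sin, Real.sin_sub, Complex.mul_re, Complex.mul_im]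

theorem intervalIntegral.inner_integral {E : Type*} [NormedAddCommGroup E] [InnerProductSpace ℝ E]
    [CompleteSpace E] {μ : Measure ℝ} {f : ℝ → E} {a b : ℝ}
    (hf : IntervalIntegrable f μ a b) (c : E) :
    ⟪c, ∫ y in a..b, f y ∂μ⟫ = ∫ y in a..b, ⟪c, f y⟫ ∂μ :=
  ((innerSL ℝ c).intervalIntegral_comp_comm hf).symm

theorem integral_sin_sub_eq_mul_sin {φ : ℝ → ℝ} {a b : ℝ} {μ : Measure ℝ}
    (hφ : IntervalIntegrable (fun y => exp (I * φ y)) μ a b) {r ψ : ℝ}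
    (h : (r : ℂ) * exp (I * ψ) = ∫ y in a..b, exp (I * φ y) ∂μ) (c : ℝ) :
    ∫ y in a..b, Real.sin (φ y - c) ∂μ = r * Real.sin (ψ - c) := by
  simp_rw [← inner_I_mul_exp_I_mul c, ← intervalIntegral.inner_integral hφ, ← h,
    ← Complex.real_smul, real_inner_smul_right]

theorem exists_norm_sub_le_of_hasDerivWithinAt_of_continuousOn
    {E X : Type*} [NormedAddCommGroup E] [NormedSpace ℝ E] [TopologicalSpace X]
    {f f' : ℝ → X → E} {a b : ℝ} {K : Set X} (hK : IsCompact K)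
    (hf : ∀ y ∈ K, ∀ s ∈ Icc a b, HasDerivWithinAt (f · y) (f' s y) (Icc a b) s)
    (hf' : ContinuousOn (fun p : ℝ × X => f' p.1 p.2) (Icc a b ×ˢ K)) :
    ∃ C, ∀ y ∈ K, ∀ s ∈ Icc a b, ∀ u ∈ Icc a b, ‖f s y - f u y‖ ≤ C * |s - u| := by
  obtain ⟨C, hC⟩ := (isCompact_Icc.prod hK).exists_bound_of_continuousOn hf'
  refine ⟨C, fun y hy s hs u hu => ?_⟩
  simpa only [Real.norm_eq_abs] using (convex_Icc a b).norm_image_sub_le_of_norm_hasDerivWithin_le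
    (hf y hy) (fun v hv => hC (v, y) ⟨hv, hy⟩) hu hs

theorem ContinuousOn.of_uncurry_left {X Y Z : Type*} [TopologicalSpace X] [TopologicalSpace Y]
    [TopologicalSpace Z] {f : X → Y → Z} {s : Set X} {t : Set Y}
    (hf : ContinuousOn (fun p : X × Y => f p.1 p.2) (s ×ˢ t)) {x : X} (hx : x ∈ s) :
    ContinuousOn (f x) t :=
  hf.comp (Continuous.prodMk_right x).continuousOn fun _ hy => ⟨hx, hy⟩

theorem intervalIntegrable_exp_I_mul {φ : ℝ → ℝ} {a b : ℝ} {μ : Measure ℝ}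
    [IsLocallyFiniteMeasure μ] (hφ : ContinuousOn φ [[a, b]]) :
    IntervalIntegrable (fun y => exp (I * φ y)) μ a b :=
  (by fun_prop : ContinuousOn _ _).intervalIntegrable

theorem hasDerivWithinAt_integral_exp_I_mul {θ θt : ℝ → ℝ → ℝ}
    (hcont : ContinuousOn (fun p : ℝ × ℝ => θ p.1 p.2) (Ici 0 ×ˢ Icc 0 1))
    (hderiv : ∀ x ∈ Icc (0:ℝ) 1, ∀ t ∈ Ici (0:ℝ),
      HasDerivWithinAt (fun s => θ s x) (θt t x) (Ici 0) t)
    (htcont : ContinuousOn (fun p : ℝ × ℝ => θt p.1 p.2) (Ici 0 ×ˢ Icc 0 1))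
    {t : ℝ} (ht : 0 ≤ t) :
    HasDerivWithinAt (fun s => ∫ y in (0:ℝ)..1, exp (I * θ s y))
      (∫ y in (0:ℝ)..1, θt t y • (I * exp (I * θ t y))) (Ici 0) t := by
  obtain ⟨C, hC⟩ := exists_norm_sub_le_of_hasDerivWithinAt_of_continuousOn (f := θ)
    (a := 0) (b := t + 1) isCompact_Icc
    (fun y hy s hs => (hderiv y hy s hs.1).mono Icc_subset_Ici_self)
    (htcont.mono (prod_mono Icc_subset_Ici_self le_rfl))
  have hnear : Icc 0 (t + 1) ∈ 𝓝[Ici 0] t :=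
    inter_mem_nhdsWithin (Ici 0) (Iic_mem_nhds (lt_add_one t))
  have hmem : ∀ y ∈ Ι (0:ℝ) 1, y ∈ Icc (0:ℝ) 1 := fun y hy => by
    rw [uIoc_of_le zero_le_one] at hy
    exact Ioc_subset_Icc_self hy
  have hint : ∀ s ∈ Ici (0:ℝ), IntervalIntegrable (fun y => exp (I * θ s y)) volume 0 1 :=
    fun s hs => intervalIntegrable_exp_I_mul <| by
      simpa only [uIcc_of_le zero_le_one] using hcont.of_uncurry_left hs
  refine intervalIntegral.hasDerivWithinAt_integral_of_lipschitz (C := C)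
    (eventually_mem_nhdsWithin.mono hint) (hint t ht) ?_ (ae_of_all _ fun y hy => ?_)
  · filter_upwards [hnear] with s hs
    refine ae_of_all _ fun y hy => (norm_exp_I_mul_sub_exp_I_mul_le _ _).trans ?_
    simpa only [Real.norm_eq_abs] using hC y (hmem y hy) s hs t ⟨ht, by linarith⟩
  · refine ((hderiv y (hmem y hy) t ht).ofReal_comp.const_mul I).cexp.congr_deriv ?_
    rw [Complex.real_smul]
    ring

theorem statement10_general (θ θt : ℝ → ℝ → ℝ)
    (hcont : ContinuousOn (fun p : ℝ × ℝ => θ p.1 p.2) (Ici 0 ×ˢ Icc 0 1))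
    (hderiv : ∀ x ∈ Icc (0:ℝ) 1, ∀ t ∈ Ici (0:ℝ),
      HasDerivWithinAt (fun s => θ s x) (θt t x) (Ici 0) t)
    (htcont : ContinuousOn (fun p : ℝ × ℝ => θt p.1 p.2) (Ici 0 ×ˢ Icc 0 1))
    (hode : ∀ t ∈ Ici (0:ℝ), ∀ x ∈ Icc (0:ℝ) 1,
      θt t x = ∫ y in (0:ℝ)..1, Real.sin (θ t y - θ t x))
    (J : Set ℝ) (hJ : J ⊆ Ici 0)
    (ψ : ℝ → ℝ)
    (hrψ : ∀ t ∈ J, 0 < orderParam (θ t) ∧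
      (orderParam (θ t) : ℂ) * Complex.exp (Complex.I * (ψ t : ℂ)) =
        ∫ y in (0:ℝ)..1, Complex.exp (Complex.I * (θ t y : ℂ))) :
    ∀ t ∈ J, HasDerivWithinAt (fun s => orderParam (θ s))
      (orderParam (θ t) * ∫ x in (0:ℝ)..1, Real.sin (ψ t - θ t x) ^ 2) J t := by
  intro t htJ
  obtain ⟨hr, hZ⟩ := hrψ t htJ
  set r := orderParam (θ t)
  have ht : t ∈ Ici (0:ℝ) := hJ htJ
  have hθ : ContinuousOn (θ t) [[0, 1]] := by
    simpa only [uIcc_of_le zero_le_one] using hcont.of_uncurry_left ht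
  have hvel : ∀ y ∈ [[(0:ℝ), 1]], θt t y = r * Real.sin (ψ t - θ t y) := fun y hy => by
    rw [uIcc_of_le zero_le_one] at hy
    rw [hode t ht y hy, integral_sin_sub_eq_mul_sin (intervalIntegrable_exp_I_mul hθ) hZ]
  have hZne : (∫ y in (0:ℝ)..1, exp (I * θ t y)) ≠ 0 := norm_pos_iff.mp hr
  refine (((hasDerivWithinAt_integral_exp_I_mul hcont hderiv htcont ht).mono hJ).norm
    hZne).congr_deriv ?_
  rw [intervalIntegral.integral_congr fun y hy => congrArg (· • (I * exp (I * θ t y))) (hvel y hy),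
    ← hZ, intervalIntegral.inner_integral (ContinuousOn.intervalIntegrable (by fun_prop))]
  simp_rw [← Complex.real_smul, real_inner_smul_left, real_inner_smul_right,
    real_inner_comm _ (exp (I * ψ t)), inner_I_mul_exp_I_mul, norm_smul, norm_exp_I_mul_ofReal,
    Real.norm_of_nonneg hr.le]
  rw [mul_one, div_eq_iff hr.ne', mul_assoc, ← intervalIntegral.integral_mul_const,
    ← intervalIntegral.integral_const_mul]
  congr 1 with y
  ring

/-- Derivative of the order parameter along the continuum Kuramoto flow: if `θ`
solves `∂ₜθ(t,x) = ∫₀¹ sin(θ(t,y) − θ(t,x)) dy` (with time derivative `θt`), and on an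
interval `J ⊆ [0,∞)` the order parameter `r(t) = r[θ(t,·)]` is positive with average
phase `ψ(t)`, then on `J` the function `r` is differentiable with
`dr/dt = r(t)·∫₀¹ sin²(ψ(t) − θ(t,x)) dx`. -/
theorem statement10 (θ θt : ℝ → ℝ → ℝ)
    (hcont : ContinuousOn (fun p : ℝ × ℝ => θ p.1 p.2) (Ici 0 ×ˢ Icc 0 1))
    (hderiv : ∀ x ∈ Icc (0:ℝ) 1, ∀ t ∈ Ici (0:ℝ),
      HasDerivWithinAt (fun s => θ s x) (θt t x) (Ici 0) t)
    (htcont : ContinuousOn (fun p : ℝ × ℝ => θt p.1 p.2) (Ici 0 ×ˢ Icc 0 1))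
    (hode : ∀ t ∈ Ici (0:ℝ), ∀ x ∈ Icc (0:ℝ) 1,
      θt t x = ∫ y in (0:ℝ)..1, Real.sin (θ t y - θ t x))
    (J : Set ℝ) (hJ : J ⊆ Ici 0) (hJconn : J.OrdConnected)
    (ψ : ℝ → ℝ)
    (hrψ : ∀ t ∈ J, 0 < orderParam (θ t) ∧
      (orderParam (θ t) : ℂ) * Complex.exp (Complex.I * (ψ t : ℂ)) =
        ∫ y in (0:ℝ)..1, Complex.exp (Complex.I * (θ t y : ℂ))) :
    ∀ t ∈ J, HasDerivWithinAt (fun s => orderParam (θ s))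
      (orderParam (θ t) * ∫ x in (0:ℝ)..1, Real.sin (ψ t - θ t x) ^ 2) J t :=
  statement10_general θ θt hcont hderiv htcont hode J hJ ψ hrψ
end

section
/- Strict growth of the order parameter below full coherence: Let φ : [0,1] → ℝ be continuous with 0 < r[φ] < 1, and let ψ ∈ ℝ satisfy r[φ]·e^{iψ} = ∫₀¹ e^{iφ(y)} dy. Then ∫₀¹ sin²(ψ − φ(x)) dx > 0. -/
/-!
If `sin (ψ - φ x)` vanished on all of `[0, 1]`, then `cos (ψ - φ x)` would take only the values
`±1` there, hence by continuity and connectedness be a constant `k = ±1`. Then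
`e^{iφ} ≡ k e^{iψ}` on `[0, 1]`, so `r[φ] = |k| = 1`. Hence for `r[φ] < 1` the continuous
nonnegative function `sin² (ψ - φ)` is positive somewhere and has positive integral.
-/

open Set

theorem IsPreconnected.cos_eq_of_sin_eq_zero {α : Type*} [TopologicalSpace α] {S : Set α}
    (hS : IsPreconnected S) {f : α → ℝ} (hf : ContinuousOn f S)
    (hsin : ∀ x ∈ S, Real.sin (f x) = 0) {x y : α} (hx : x ∈ S) (hy : y ∈ S) :
    Real.cos (f x) = Real.cos (f y) :=
  hS.constant_of_mapsTo (T := ({1, -1} : Set ℝ)) (toFinite _).isDiscrete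
    (Real.continuous_cos.comp_continuousOn hf)
    (fun z hz => Real.sin_eq_zero_iff_cos_eq.mp (hsin z hz)) hx hy

theorem Complex.exp_I_mul_eq_cos_mul_of_sin_sub_eq_zero {θ ψ : ℝ}
    (h : Real.sin (ψ - θ) = 0) :
    Complex.exp (Complex.I * θ) = Real.cos (ψ - θ) * Complex.exp (Complex.I * ψ) := by
  have hθ : Complex.I * θ = Complex.I * ψ + ((-(ψ - θ) : ℝ) : ℂ) * Complex.I := by
    push_cast; ring
  rw [hθ, Complex.exp_add, Complex.exp_mul_I, ← Complex.ofReal_cos, ← Complex.ofReal_sin,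
    Real.cos_neg, Real.sin_neg, h]
  simp only [neg_zero, Complex.ofReal_zero, zero_mul, add_zero]
  ring

theorem orderParam_eq_one_of_sin_sub_eq_zero {φ : ℝ → ℝ} (hφ : ContinuousOn φ (Icc 0 1))
    {ψ : ℝ} (hsin : ∀ x ∈ Icc (0 : ℝ) 1, Real.sin (ψ - φ x) = 0) :
    orderParam φ = 1 := by
  set k := Real.cos (ψ - φ 0)
  have hconst : ∀ y ∈ uIcc (0 : ℝ) 1,
      Complex.exp (Complex.I * φ y) = k * Complex.exp (Complex.I * ψ) := by
    intro y hy
    rw [uIcc_of_le zero_le_one] at hy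
    rw [Complex.exp_I_mul_eq_cos_mul_of_sin_sub_eq_zero (hsin y hy),
      isPreconnected_Icc.cos_eq_of_sin_eq_zero (f := fun x => ψ - φ x)
        (continuousOn_const.sub hφ) hsin hy ⟨le_rfl, zero_le_one⟩]
  have hk : |k| = 1 := by
    rcases Real.sin_eq_zero_iff_cos_eq.mp (hsin 0 ⟨le_rfl, zero_le_one⟩) with h | h <;>
      simp [k, h]
  rw [orderParam, intervalIntegral.integral_congr hconst, intervalIntegral.integral_const]
  simp [hk]

theorem statement11_general (φ : ℝ → ℝ) (hφ : ContinuousOn φ (Icc 0 1))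
    (hr : orderParam φ ∈ Ioo (0:ℝ) 1) (ψ : ℝ) :
    0 < ∫ x in (0:ℝ)..1, Real.sin (ψ - φ x) ^ 2 := by
  obtain ⟨c, hc, hsin⟩ : ∃ c ∈ Icc (0 : ℝ) 1, Real.sin (ψ - φ c) ≠ 0 := by
    by_contra! h
    exact hr.2.ne (orderParam_eq_one_of_sin_sub_eq_zero hφ h)
  exact intervalIntegral.integral_pos zero_lt_one
    ((Real.continuous_sin.comp_continuousOn (continuousOn_const.sub hφ)).pow 2)
    (fun x _ => sq_nonneg _) ⟨c, hc, by positivity⟩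

/-- Strict growth of the order parameter below full coherence: if `0 < r[φ] < 1` and
`ψ` is an average phase of `φ`, then `∫₀¹ sin²(ψ − φ(x)) dx > 0`. -/
theorem statement11 (φ : ℝ → ℝ) (hφ : ContinuousOn φ (Icc 0 1))
    (hr : orderParam φ ∈ Ioo (0:ℝ) 1) (ψ : ℝ)
    (hψ : (orderParam φ : ℂ) * Complex.exp (Complex.I * (ψ : ℂ)) =
      ∫ y in (0:ℝ)..1, Complex.exp (Complex.I * (φ y : ℂ))) :
    0 < ∫ x in (0:ℝ)..1, Real.sin (ψ - φ x) ^ 2 :=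
  statement11_general φ hφ hr ψ
end

section
/- Half-angle transformation identity: Let B ∈ (−1,1) and C ∈ (−π,π), and define A := 2·arctan( √((1+B)/(1−B)) · tan(C/2) ). Then 1 − B·cos(C) > 0, and sin(A) = √(1−B²)·sin(C) / (1 − B·cos(C)) and cos(A) = (cos(C) − B) / (1 − B·cos(C)). -/
/-!
Put `t = tan (C / 2)`, `k = √((1 + B) / (1 - B))` and `x = k t`, so that `A = 2 arctan x`
and, as `C ∈ (-π, π)`, also `C = 2 arctan t`. The tangent half-angle formulas express the sine
and cosine of both angles rationally in `t` and `x`, and since `k² (1 - B) = 1 + B`,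
`1 - B cos C = (1 - B)(1 + x²) / (1 + t²)` and `cos C - B = (1 - B)(1 - x²) / (1 + t²)`.
-/

open Set Real

lemma sin_two_mul_arctan (x : ℝ) : sin (2 * arctan x) = 2 * x / (1 + x ^ 2) := by
  simpa [tan_arctan] using sin_eq_two_mul_tan_half_div_one_add_tan_half_sq (2 * arctan x)

lemma cos_two_mul_arctan (x : ℝ) : cos (2 * arctan x) = (1 - x ^ 2) / (1 + x ^ 2) := by
  rw [cos_two_mul, cos_sq_arctan]
  field_simp
  ring

lemma cos_eq_one_sub_tan_half_sq_div_of_mem_Ioo {C : ℝ} (hC : C ∈ Ioo (-π) π) :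
    cos C = (1 - tan (C / 2) ^ 2) / (1 + tan (C / 2) ^ 2) := by
  have hC' : 2 * arctan (tan (C / 2)) = C := by
    rw [arctan_tan (by linarith [hC.1]) (by linarith [hC.2])]
    ring
  conv_lhs => rw [← hC', cos_two_mul_arctan]

lemma one_sub_mul_cos_pos {B : ℝ} (hB : B ∈ Ioo (-1 : ℝ) 1) (C : ℝ) : 0 < 1 - B * cos C := by
  have : |B * cos C| < 1 := by
    rw [abs_mul]
    exact (mul_le_of_le_one_right (abs_nonneg B) (abs_cos_le_one C)).trans_lt (abs_lt.2 hB)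
  linarith [le_abs_self (B * cos C)]

lemma sqrt_one_add_div_one_sub_mul {B : ℝ} (hB : B ∈ Ioo (-1 : ℝ) 1) :
    √((1 + B) / (1 - B)) * (1 - B) = √(1 - B ^ 2) := by
  have h : 0 < 1 - B := by linarith [hB.2]
  nth_rw 2 [← sqrt_sq h.le]
  rw [← sqrt_mul (div_nonneg (by linarith [hB.1]) h.le)]
  congr 1
  field_simp
  ring

/-- Half-angle transformation identity: for `B ∈ (−1,1)` and `C ∈ (−π,π)`, with
`A := 2·arctan(√((1+B)/(1−B))·tan(C/2))`, one has `1 − B·cos C > 0`,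
`sin A = √(1−B²)·sin C/(1 − B·cos C)` and `cos A = (cos C − B)/(1 − B·cos C)`. -/
theorem statement17 (B C : ℝ) (hB : B ∈ Ioo (-1:ℝ) 1) (hC : C ∈ Ioo (-Real.pi) Real.pi) :
    0 < 1 - B * Real.cos C ∧
    Real.sin (2 * Real.arctan (Real.sqrt ((1 + B) / (1 - B)) * Real.tan (C / 2))) =
      Real.sqrt (1 - B ^ 2) * Real.sin C / (1 - B * Real.cos C) ∧
    Real.cos (2 * Real.arctan (Real.sqrt ((1 + B) / (1 - B)) * Real.tan (C / 2))) =
      (Real.cos C - B) / (1 - B * Real.cos C) := by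
  set t := tan (C / 2)
  set k := √((1 + B) / (1 - B))
  have hB1 : 1 - B ≠ 0 := by linarith [hB.2]
  have hk : k ^ 2 * (1 - B) = 1 + B := by
    rw [sq_sqrt (div_nonneg (by linarith [hB.1]) (by linarith [hB.2]))]
    field_simp
  have hk1 : k * (1 - B) = √(1 - B ^ 2) := sqrt_one_add_div_one_sub_mul hB
  have hsin : sin C = 2 * t / (1 + t ^ 2) := sin_eq_two_mul_tan_half_div_one_add_tan_half_sq C
  have hcos : cos C = (1 - t ^ 2) / (1 + t ^ 2) := cos_eq_one_sub_tan_half_sq_div_of_mem_Ioo hC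
  have hden : 1 - B * cos C = (1 - B) * (1 + (k * t) ^ 2) / (1 + t ^ 2) := by
    rw [hcos]
    field_simp
    linear_combination -t ^ 2 * hk
  have hnum : cos C - B = (1 - B) * (1 - (k * t) ^ 2) / (1 + t ^ 2) := by
    rw [hcos]
    field_simp
    linear_combination t ^ 2 * hk
  refine ⟨one_sub_mul_cos_pos hB C, ?_, ?_⟩
  · rw [sin_two_mul_arctan, hsin, hden, ← hk1]
    field_simp
  · rw [cos_two_mul_arctan, hnum, hden, div_div_div_cancel_right₀ (by positivity),
      mul_div_mul_left _ _ hB1]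
end

section
/- Almost sure eventual degree and codegree bounds for Erdős–Rényi graphs: Fix p ∈ (0,1]. For each n ∈ ℕ let Aⁿ be the adjacency matrix of an Erdős–Rényi graph G(n,p), with all edge indicator variables (across all n and all pairs i ≤ j) independent on a common probability space. Then almost surely there exists n̄ ∈ ℕ such that for all n ≥ n̄: (i) for every i ∈ {1,…,n}, Σ_{k=1}ⁿ Aⁿᵢₖ ≤ p·(n + n^{2/3}); and (ii) for every pair i ≠ j in {1,…,n}, Σ_{k=1}ⁿ min(Aⁿᵢₖ, Aⁿⱼₖ) ≥ p²·(n − n^{2/3}). -/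
open MeasureTheory Set Filter

/-- The Bernoulli measure on `Bool` with success probability `p` (clipped to `[0,1]`;
below one always has `0 ≤ p ≤ 1`). -/
noncomputable def bern (p : ℝ) : Measure Bool :=
  (PMF.bernoulli (min (Real.toNNReal p) 1) (min_le_right _ _)).toMeasure

instance (p : ℝ) : IsProbabilityMeasure (bern p) :=
  PMF.toMeasure.isProbabilityMeasure _

/-!
A degree is a sum of `n` independent Bernoulli(`p`) indicators. For `i ≠ j` the codegree
dominates the sum, over `k ∉ {i, j}`, of the products `Aᵢₖ Aⱼₖ`; the pairs of edges `{ik, jk}`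
are disjoint, so these products are independent Bernoulli(`p²`) indicators. Hoeffding's
inequality with deviation of order `n^{2/3}` bounds each bad event by `exp (-(p⁴/2) n^{1/3})`,
a union bound over at most `2n²` events keeps the total summable, and Borel–Cantelli concludes.
-/

open ProbabilityTheory Real Finset Function

namespace ProbabilityTheory

variable {Ω ι κ : Type*} [MeasurableSpace Ω] {μ : Measure Ω}

theorem iIndepFun.iIndepSet_preimage {β : ι → Type*} [∀ i, MeasurableSpace (β i)]
    {f : ∀ i, Ω → β i} (h : iIndepFun f μ) (hf : ∀ i, Measurable (f i))
    {t : ∀ i, Set (β i)} (ht : ∀ i, MeasurableSet (t i)) :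
    iIndepSet (fun i => f i ⁻¹' t i) μ :=
  (iIndepSet_iff_meas_biInter fun i => hf i (ht i)).2 fun _ =>
    h.meas_biInter fun i _ => ⟨t i, ht i, rfl⟩

theorem iIndepSet.biInter_of_pairwise_disjoint {E : ι → Set Ω} (hE : iIndepSet E μ)
    (hEm : ∀ i, MeasurableSet (E i)) {B : κ → Finset ι} (hB : Pairwise (Disjoint on B)) :
    iIndepSet (fun k => ⋂ i ∈ B k, E i) μ := by
  classical
  refine (iIndepSet_iff_meas_biInter fun k =>
    (B k).measurableSet_biInter fun i _ => hEm i).2 fun s => ?_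
  calc μ (⋂ k ∈ s, ⋂ i ∈ B k, E i) = μ (⋂ i ∈ s.biUnion B, E i) := by
        rw [Finset.set_biInter_biUnion]
    _ = ∏ k ∈ s, ∏ i ∈ B k, μ (E i) := by
        rw [hE.meas_biInter, Finset.prod_biUnion (hB.set_pairwise _)]
    _ = ∏ k ∈ s, μ (⋂ i ∈ B k, E i) := by simp_rw [hE.meas_biInter]

theorem iIndepSet.iIndepFun_indicator_sub {F : κ → Set Ω} (hF : iIndepSet F μ) :
    iIndepFun (fun k ω => (F k).indicator (1 : Ω → ℝ) ω - μ.real (F k)) μ :=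
  hF.iIndepFun_indicator.comp (fun k x => x - μ.real (F k)) fun _ => by fun_prop

variable [IsProbabilityMeasure μ]

theorem hasSubgaussianMGF_indicator_sub {F : κ → Set Ω} (hFm : ∀ k, MeasurableSet (F k))
    (k : κ) : HasSubgaussianMGF (fun ω => (F k).indicator 1 ω - μ.real (F k)) (1 / 4) μ := by
  have h := hasSubgaussianMGF_of_mem_Icc (μ := μ) (X := (F k).indicator (1 : Ω → ℝ)) (a := 0)
    (b := 1) (measurable_one.indicator (hFm k)).aemeasurable (ae_of_all _ fun ω => ?_)
  · rw [integral_indicator_one (hFm k)] at h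
    convert h using 1
    norm_num
  · by_cases hω : ω ∈ F k <;> simp [hω]

private theorem neg_sq_div_sum_quarter (s : Finset κ) (ε : ℝ) :
    -ε ^ 2 / (2 * ((∑ _k ∈ s, (1 / 4 : NNReal) : NNReal) : ℝ)) = -2 * ε ^ 2 / #s := by
  push_cast [Finset.sum_const, nsmul_eq_mul]
  ring

theorem iIndepSet.measureReal_sum_indicator_ge_le {F : κ → Set Ω} (hF : iIndepSet F μ)
    (hFm : ∀ k, MeasurableSet (F k)) (s : Finset κ) {ε : ℝ} (hε : 0 ≤ ε) :
    μ.real {ω | ∑ k ∈ s, μ.real (F k) + ε ≤ ∑ k ∈ s, (F k).indicator 1 ω}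
      ≤ exp (-2 * ε ^ 2 / #s) := by
  have h := HasSubgaussianMGF.measure_sum_ge_le_of_iIndepFun (s := s)
    hF.iIndepFun_indicator_sub (fun k _ => hasSubgaussianMGF_indicator_sub hFm k) hε
  rw [neg_sq_div_sum_quarter] at h
  convert h using 2
  ext ω
  simp only [Set.mem_ofPred_eq, Finset.sum_sub_distrib]
  constructor <;> intro <;> linarith

theorem iIndepSet.measureReal_sum_indicator_le_le {F : κ → Set Ω} (hF : iIndepSet F μ)
    (hFm : ∀ k, MeasurableSet (F k)) (s : Finset κ) {ε : ℝ} (hε : 0 ≤ ε) :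
    μ.real {ω | ∑ k ∈ s, (F k).indicator 1 ω ≤ ∑ k ∈ s, μ.real (F k) - ε}
      ≤ exp (-2 * ε ^ 2 / #s) := by
  have h := HasSubgaussianMGF.measure_sum_ge_le_of_iIndepFun (s := s)
    (hF.iIndepFun_indicator_sub.comp (fun _ x => -x) fun _ => measurable_neg)
    (fun k _ => (hasSubgaussianMGF_indicator_sub hFm k).neg) hε
  rw [neg_sq_div_sum_quarter] at h
  convert h using 2
  ext ω
  simp only [Set.mem_ofPred_eq, comp_apply, Finset.sum_neg_distrib, Finset.sum_sub_distrib]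
  constructor <;> intro <;> linarith

end ProbabilityTheory

theorem summable_sq_mul_exp_neg_mul_rpow_third {c : ℝ} (hc : 0 < c) :
    Summable fun n : ℕ => (n : ℝ) ^ 2 * exp (-c * (n : ℝ) ^ ((1 : ℝ) / 3)) := by
  refine Summable.of_nonneg_of_le (fun n => by positivity) (fun n => ?_)
    ((summable_nat_pow_inv.2 (by norm_num : 1 < 3)).mul_left (Nat.factorial 15 / c ^ 15))
  rcases n.eq_zero_or_pos with rfl | hn
  · simp
  have hn : (0 : ℝ) < n := by exact_mod_cast hn
  set y := (n : ℝ) ^ ((1 : ℝ) / 3)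
  have hy : y ^ 15 = (n : ℝ) ^ 5 := by
    rw [← Real.rpow_natCast, ← Real.rpow_mul hn.le]; norm_num
  have hexp : c ^ 15 * (n : ℝ) ^ 5 / Nat.factorial 15 ≤ exp (c * y) := by
    simpa [mul_pow, hy] using Real.pow_div_factorial_le_exp (c * y) (by positivity) 15
  rw [neg_mul, Real.exp_neg, ← div_eq_mul_inv, div_le_iff₀ (exp_pos _)]
  calc (n : ℝ) ^ 2 = Nat.factorial 15 / c ^ 15 * ((n : ℝ) ^ 3)⁻¹
        * (c ^ 15 * (n : ℝ) ^ 5 / Nat.factorial 15) := by field_simp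
    _ ≤ _ := by gcongr

theorem ae_eventually_of_measureReal_le_summable {Ω : Type*} [MeasurableSpace Ω] {μ : Measure Ω}
    [IsFiniteMeasure μ] {P : ℕ → Ω → Prop} {g : ℕ → ℝ} (hg : Summable g)
    (h : ∀ᶠ n in atTop, μ.real {ω | ¬ P n ω} ≤ g n) : ∀ᵐ ω ∂μ, ∀ᶠ n in atTop, P n ω := by
  have hs : Summable fun n => μ.real {ω | ¬ P n ω} :=
    hg.of_norm_bounded_eventually_nat (h.mono fun n hn => by
      rwa [Real.norm_of_nonneg measureReal_nonneg])
  have hfin : ∑' n, μ {ω | ¬ P n ω} ≠ ⊤ := by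
    convert ENNReal.ofReal_ne_top (r := ∑' n, μ.real {ω | ¬ P n ω}) using 1
    rw [ENNReal.ofReal_tsum_of_nonneg (fun _ => measureReal_nonneg) hs]
    exact tsum_congr fun n => (ofReal_measureReal).symm
  simpa using ae_eventually_notMem hfin

theorem bern_real_true {p : ℝ} (hp : p ∈ Icc (0 : ℝ) 1) : (bern p).real {true} = p := by
  rw [measureReal_def, bern, PMF.toMeasure_apply_singleton _ _ (measurableSet_singleton true),
    PMF.bernoulli_apply, cond_true, min_eq_left (Real.toNNReal_le_one.2 hp.2)]
  simp [hp.1]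

namespace ErdosRenyi

abbrev EdgeIndex := (n : ℕ) × {q : Fin n × Fin n // q.1 ≤ q.2}

def edge (n : ℕ) (i k : Fin n) : EdgeIndex :=
  if h : i ≤ k then ⟨n, (i, k), h⟩ else ⟨n, (k, i), (not_le.1 h).le⟩

theorem edge_eq_edge_iff {n : ℕ} {i k i' k' : Fin n} :
    edge n i k = edge n i' k' ↔ s(i, k) = s(i', k') := by
  unfold edge
  split_ifs <;> simp <;> grind

def edgeEvent {Ω : Type*} (A : (n : ℕ) → Ω → Fin n → Fin n → Bool) (e : EdgeIndex) : Set Ω :=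
  (fun ω => A e.1 ω e.2.1.1 e.2.1.2) ⁻¹' {true}

theorem edgeEvent_edge {Ω : Type*} {A : (n : ℕ) → Ω → Fin n → Fin n → Bool}
    (hsym : ∀ n ω (i j : Fin n), A n ω i j = A n ω j i) (n : ℕ) (i k : Fin n) :
    edgeEvent A (edge n i k) = {ω | A n ω i k} := by
  unfold edge
  split_ifs
  · rfl
  · ext ω; simp [edgeEvent, hsym n ω k i]

theorem edge_ne_edge_of_mem_compl {n : ℕ} {i j k : Fin n} (hij : i ≠ j)
    (hk : k ∈ ({i, j}ᶜ : Finset (Fin n))) : edge n i k ≠ edge n j k := fun h => by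
  simp only [Finset.mem_compl, Finset.mem_insert, Finset.mem_singleton, not_or] at hk
  simp only [edge_eq_edge_iff, Sym2.eq_iff] at h
  grind

theorem pairwise_disjoint_edge_pairs {n : ℕ} {i j : Fin n} :
    Pairwise (Disjoint on fun k : ({i, j}ᶜ : Finset (Fin n)) =>
      ({edge n i k, edge n j k} : Finset EdgeIndex)) := by
  rintro ⟨k, hk⟩ ⟨l, hl⟩ hkl
  have hkl : k ≠ l := fun h => hkl (Subtype.ext h)
  simp only [Finset.mem_compl, Finset.mem_insert, Finset.mem_singleton, not_or] at hk hl
  simp only [onFun, Finset.disjoint_left, Finset.mem_insert, Finset.mem_singleton]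
  rintro e (rfl | rfl) (h | h) <;> simp only [edge_eq_edge_iff, Sym2.eq_iff] at h <;> grind

def DegreeBounds (p : ℝ) (n : ℕ) (a : Fin n → Fin n → Bool) : Prop :=
  (∀ i, (∑ k, if a i k then (1 : ℝ) else 0) ≤ p * ((n : ℝ) + (n : ℝ) ^ ((2 : ℝ) / 3))) ∧
  (∀ i j, i ≠ j → p ^ 2 * ((n : ℝ) - (n : ℝ) ^ ((2 : ℝ) / 3)) ≤
    ∑ k, min (if a i k then (1 : ℝ) else 0) (if a j k then (1 : ℝ) else 0))

theorem rpow_one_third_pow_three {x : ℝ} (hx : 0 ≤ x) : (x ^ ((1 : ℝ) / 3)) ^ 3 = x := by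
  rw [← Real.rpow_natCast, ← Real.rpow_mul hx]; norm_num

theorem rpow_one_third_sq {x : ℝ} (hx : 0 ≤ x) : (x ^ ((1 : ℝ) / 3)) ^ 2 = x ^ ((2 : ℝ) / 3) := by
  rw [← Real.rpow_natCast, ← Real.rpow_mul hx]; norm_num

-- Hoeffding exponents `-2ε²/m` written in `y = n^{1/3}`, so that `n = y³` and `n^{2/3} = y²`.
theorem degree_exponent_le {p y : ℝ} (hp0 : 0 ≤ p) (hp1 : p ≤ 1) (hy : 0 < y) :
    -2 * (p * y ^ 2) ^ 2 / y ^ 3 ≤ -(p ^ 4 / 2) * y := by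
  have hp4 : p ^ 4 ≤ p ^ 2 := pow_le_pow_of_le_one hp0 hp1 (by norm_num)
  rw [div_le_iff₀ (by positivity)]
  nlinarith [pow_pos hy 4, sq_nonneg p]

theorem codegree_exponent_le {p y : ℝ} (hy : 2 ≤ y) :
    -2 * (p ^ 2 * (y ^ 2 - 2)) ^ 2 / (y ^ 3 - 2) ≤ -(p ^ 4 / 2) * y := by
  have hy3 : 0 < y ^ 3 - 2 := by nlinarith [pow_le_pow_left₀ (by norm_num) hy 3]
  have hy2 : 4 ≤ y ^ 2 := by nlinarith
  have hsq : y ^ 4 ≤ 4 * (y ^ 2 - 2) ^ 2 := by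
    nlinarith [mul_nonneg (by linarith : (0 : ℝ) ≤ 3 * y ^ 2 - 4) (by linarith : 0 ≤ y ^ 2 - 4)]
  rw [div_le_iff₀ hy3]
  nlinarith [pow_nonneg (sq_nonneg p) 2, mul_le_mul_of_nonneg_left hsq (pow_nonneg (sq_nonneg p) 2)]

section Tails

variable {Ω : Type*} [MeasurableSpace Ω] {μ : Measure Ω} [IsProbabilityMeasure μ]
  {A : (n : ℕ) → Ω → Fin n → Fin n → Bool} {p : ℝ}
  (hsym : ∀ n ω (i j : Fin n), A n ω i j = A n ω j i)
  (hE : iIndepSet (edgeEvent A) μ) (hEm : ∀ e, MeasurableSet (edgeEvent A e))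
  (hEp : ∀ e, μ.real (edgeEvent A e) = p)
include hsym hE hEm hEp

theorem measureReal_degree_ge_le {n : ℕ} (i : Fin n) {ε : ℝ} (hε : 0 ≤ ε) :
    μ.real {ω | n * p + ε ≤ ∑ k, if A n ω i k then (1 : ℝ) else 0} ≤ exp (-2 * ε ^ 2 / n) := by
  have hinj : Injective (edge n i) := fun k l h => Sym2.congr_right.1 (edge_eq_edge_iff.1 h)
  have h := (hE.precomp hinj).measureReal_sum_indicator_ge_le (fun k => hEm _) Finset.univ hε
  simp only [comp_apply, hEp, Finset.sum_const, Finset.card_univ, Fintype.card_fin,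
    nsmul_eq_mul] at h
  simp only [edgeEvent_edge hsym] at h
  convert h using 4 with ω
  simp [Set.indicator_apply]

theorem measureReal_codegree_le_le {n : ℕ} {i j : Fin n} (hij : i ≠ j) {ε : ℝ} (hε : 0 ≤ ε) :
    μ.real {ω | ∑ k, min (if A n ω i k then (1 : ℝ) else 0) (if A n ω j k then 1 else 0)
      ≤ (n - 2) * p ^ 2 - ε} ≤ exp (-2 * ε ^ 2 / (n - 2)) := by
  set s : Finset (Fin n) := {i, j}ᶜ
  set B : s → Finset EdgeIndex := fun k => {edge n i k, edge n j k}
  have hFm : ∀ k, MeasurableSet (⋂ e ∈ B k, edgeEvent A e) := fun k =>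
    (B k).measurableSet_biInter fun e _ => hEm e
  have hFp : ∀ k, μ.real (⋂ e ∈ B k, edgeEvent A e) = p ^ 2 := fun k => by
    rw [measureReal_def, hE.meas_biInter, ENNReal.toReal_prod,
      Finset.prod_pair (edge_ne_edge_of_mem_compl hij k.2)]
    simp only [← measureReal_def, hEp, sq]
  have hFind : ∀ k ω, (⋂ e ∈ B k, edgeEvent A e).indicator 1 ω
      = min (if A n ω i k then (1 : ℝ) else 0) (if A n ω j k then 1 else 0) := fun k ω => by
    simp only [B, Finset.set_biInter_insert, Finset.set_biInter_singleton, edgeEvent_edge hsym]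
    by_cases hi : A n ω i k <;> by_cases hj : A n ω j k <;> simp [hi, hj]
  have hcard : (#(Finset.univ : Finset s) : ℝ) = n - 2 := by
    have h2 : 2 ≤ n := by
      simpa [Finset.card_pair hij] using Finset.card_le_univ ({i, j} : Finset (Fin n))
    rw [Finset.card_univ, Fintype.card_coe, Finset.card_compl, Finset.card_pair hij,
      Fintype.card_fin, Nat.cast_sub h2, Nat.cast_two]
  have hF := hE.biInter_of_pairwise_disjoint (B := B) hEm pairwise_disjoint_edge_pairs
  have h := hF.measureReal_sum_indicator_le_le hFm Finset.univ hε
  simp only [hFp, hFind, Finset.sum_const, nsmul_eq_mul, hcard] at h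
  refine le_trans (measureReal_mono fun ω hω => ?_) h
  simp only [Set.mem_ofPred_eq] at hω ⊢
  refine le_trans ?_ hω
  rw [Finset.univ_eq_attach, Finset.sum_attach s
    fun k => min (if A n ω i k then (1 : ℝ) else 0) (if A n ω j k then 1 else 0)]
  exact Finset.sum_le_sum_of_subset_of_nonneg (Finset.subset_univ s) fun k _ _ => by positivity

theorem measureReal_degree_gt_le (hp0 : 0 ≤ p) (hp1 : p ≤ 1) {n : ℕ} (i : Fin n) :
    μ.real {ω | p * ((n : ℝ) + (n : ℝ) ^ ((2 : ℝ) / 3)) < ∑ k, if A n ω i k then (1 : ℝ) else 0}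
      ≤ exp (-(p ^ 4 / 2) * (n : ℝ) ^ ((1 : ℝ) / 3)) := by
  have hn : (0 : ℝ) < n := by exact_mod_cast i.pos
  have hexp := degree_exponent_le hp0 hp1 (by positivity : 0 < (n : ℝ) ^ ((1 : ℝ) / 3))
  rw [rpow_one_third_sq hn.le, rpow_one_third_pow_three hn.le] at hexp
  refine le_trans (measureReal_mono fun ω hω => ?_)
    ((measureReal_degree_ge_le hsym hE hEm hEp i (by positivity)).trans (exp_le_exp.2 hexp))
  simp only [Set.mem_ofPred_eq] at hω ⊢
  linarith

theorem measureReal_codegree_lt_le {n : ℕ} (hn : 8 ≤ n) {i j : Fin n} (hij : i ≠ j) :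
    μ.real {ω | ∑ k, min (if A n ω i k then (1 : ℝ) else 0) (if A n ω j k then 1 else 0)
      < p ^ 2 * ((n : ℝ) - (n : ℝ) ^ ((2 : ℝ) / 3))}
      ≤ exp (-(p ^ 4 / 2) * (n : ℝ) ^ ((1 : ℝ) / 3)) := by
  have hn0 : (0 : ℝ) ≤ n := n.cast_nonneg
  have hy : 2 ≤ (n : ℝ) ^ ((1 : ℝ) / 3) := by
    refine le_of_pow_le_pow_left₀ three_ne_zero (by positivity) ?_
    rw [rpow_one_third_pow_three hn0]
    exact_mod_cast hn
  have hexp := codegree_exponent_le (p := p) hy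
  have hε : 0 ≤ p ^ 2 * ((n : ℝ) ^ ((2 : ℝ) / 3) - 2) := by
    rw [← rpow_one_third_sq hn0]
    exact mul_nonneg (sq_nonneg p) (by nlinarith)
  rw [rpow_one_third_sq hn0, rpow_one_third_pow_three hn0] at hexp
  refine le_trans (measureReal_mono fun ω hω => ?_)
    ((measureReal_codegree_le_le hsym hE hEm hEp hij hε).trans (exp_le_exp.2 hexp))
  simp only [Set.mem_ofPred_eq] at hω ⊢
  linarith

theorem measureReal_not_degreeBounds_le (hp0 : 0 ≤ p) (hp1 : p ≤ 1) {n : ℕ} (hn : 8 ≤ n) :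
    μ.real {ω | ¬ DegreeBounds p n (A n ω)}
      ≤ 2 * (n : ℝ) ^ 2 * exp (-(p ^ 4 / 2) * (n : ℝ) ^ ((1 : ℝ) / 3)) := by
  set b := exp (-(p ^ 4 / 2) * (n : ℝ) ^ ((1 : ℝ) / 3))
  have hsub : {ω | ¬ DegreeBounds p n (A n ω)} ⊆
      (⋃ i, {ω | p * ((n : ℝ) + (n : ℝ) ^ ((2 : ℝ) / 3))
        < ∑ k, if A n ω i k then (1 : ℝ) else 0}) ∪
      ⋃ i, ⋃ j, {ω | i ≠ j ∧ ∑ k, min (if A n ω i k then (1 : ℝ) else 0)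
        (if A n ω j k then 1 else 0) < p ^ 2 * ((n : ℝ) - (n : ℝ) ^ ((2 : ℝ) / 3))} := by
    intro ω hω
    simp only [DegreeBounds, not_and_or, not_forall, not_le] at hω
    simpa using hω
  have hpair : ∀ i j : Fin n, μ.real {ω | i ≠ j ∧ ∑ k, min (if A n ω i k then (1 : ℝ) else 0)
      (if A n ω j k then 1 else 0) < p ^ 2 * ((n : ℝ) - (n : ℝ) ^ ((2 : ℝ) / 3))} ≤ b := by
    intro i j
    by_cases hij : i = j
    · simp [hij, b, exp_nonneg]
    · exact (measureReal_mono fun ω hω => hω.2).trans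
        (measureReal_codegree_lt_le hsym hE hEm hEp hn hij)
  calc _ ≤ ∑ _i : Fin n, b + ∑ _i : Fin n, ∑ _j : Fin n, b := by
        refine (measureReal_mono hsub).trans ((measureReal_union_le _ _).trans (add_le_add ?_ ?_))
        · exact (measureReal_iUnion_fintype_le _).trans (Finset.sum_le_sum fun i _ =>
            measureReal_degree_gt_le hsym hE hEm hEp hp0 hp1 i)
        · refine (measureReal_iUnion_fintype_le _).trans (Finset.sum_le_sum fun i _ => ?_)
          exact (measureReal_iUnion_fintype_le _).trans (Finset.sum_le_sum fun j _ => hpair i j)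
    _ = ((n : ℝ) + (n : ℝ) ^ 2) * b := by simp; ring
    _ ≤ 2 * (n : ℝ) ^ 2 * b := by
        have : (1 : ℝ) ≤ n := by exact_mod_cast (by omega : 1 ≤ n)
        exact mul_le_mul_of_nonneg_right (by nlinarith) (exp_nonneg _)

end Tails

end ErdosRenyi

open ErdosRenyi in
/-- Almost sure eventual degree and codegree bounds for Erdős–Rényi graphs: if, on a
common probability space, `A n` is for each `n` the (symmetric) adjacency matrix of
`G(n,p)` with all edge indicators (across all `n` and all pairs `i ≤ j`) independent
`Bernoulli(p)` variables, then almost surely, for all sufficiently large `n`, every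
row sum is at most `p(n + n^{2/3})` and every codegree sum (over `i ≠ j`) is at least
`p²(n − n^{2/3})`. -/
theorem statement19 {Ω : Type*} [MeasurableSpace Ω] (μ : Measure Ω)
    [IsProbabilityMeasure μ] (p : ℝ) (hp : p ∈ Ioc (0:ℝ) 1)
    (A : (n : ℕ) → Ω → Fin n → Fin n → Bool)
    (hmeas : ∀ n (i j : Fin n), Measurable fun ω => A n ω i j)
    (hsym : ∀ n ω (i j : Fin n), A n ω i j = A n ω j i)
    (hindep : ProbabilityTheory.iIndepFun
      (fun s : (n : ℕ) × {q : Fin n × Fin n // q.1 ≤ q.2} =>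
        fun ω => A s.1 ω s.2.val.1 s.2.val.2) μ)
    (hlaw : ∀ s : (n : ℕ) × {q : Fin n × Fin n // q.1 ≤ q.2},
      μ.map (fun ω => A s.1 ω s.2.val.1 s.2.val.2) = bern p) :
    ∀ᵐ ω ∂μ, ∃ N : ℕ, ∀ n ≥ N,
      (∀ i : Fin n,
        (∑ k, if A n ω i k then (1:ℝ) else 0) ≤ p * ((n : ℝ) + (n : ℝ) ^ ((2:ℝ)/3))) ∧
      (∀ i j : Fin n, i ≠ j →
        p ^ 2 * ((n : ℝ) - (n : ℝ) ^ ((2:ℝ)/3)) ≤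
          ∑ k, min (if A n ω i k then (1:ℝ) else 0) (if A n ω j k then (1:ℝ) else 0)) := by
  have hEm : ∀ e, MeasurableSet (edgeEvent A e) := fun e =>
    hmeas _ _ _ (measurableSet_singleton true)
  have hE : iIndepSet (edgeEvent A) μ :=
    hindep.iIndepSet_preimage (fun _ => hmeas _ _ _) fun _ => measurableSet_singleton true
  have hEp : ∀ e, μ.real (edgeEvent A e) = p := fun e => by
    rw [edgeEvent, ← map_measureReal_apply (hmeas _ _ _) (measurableSet_singleton true), hlaw,
      bern_real_true (Ioc_subset_Icc_self hp)]
  have hsum := (summable_sq_mul_exp_neg_mul_rpow_third (c := p ^ 4 / 2)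
    (by have := hp.1; positivity)).mul_left 2
  have hbad : ∀ᶠ n in atTop, μ.real {ω | ¬ DegreeBounds p n (A n ω)}
      ≤ 2 * ((n : ℝ) ^ 2 * exp (-(p ^ 4 / 2) * (n : ℝ) ^ ((1 : ℝ) / 3))) :=
    eventually_atTop.2 ⟨8, fun n hn => (measureReal_not_degreeBounds_le hsym hE hEm hEp
      hp.1.le hp.2 hn).trans_eq (mul_assoc _ _ _)⟩
  filter_upwards [ae_eventually_of_measureReal_le_summable hsum hbad] with ω hω
  exact eventually_atTop.1 hω
end
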